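/- arXiv:2509.24600 — 2 statements merged into one kernel-verified Lean document; each statement's English description precedes it below -/
import Mathlib

section
/- For every k ∈ ℕ and every finite simple graph G on n vertices, α((G + Ḡ)^{2k}) ≥ C(2k,k) · n^k, where powers are strong powers, + is disjoint union, and Ḡ the complement of G. -/
/-! A word of Alon's independent set is determined by the set `T` of its `k` positions in the copy
of `G` and by the word `f : Fin k → V` that both halves spell from left to right. If two such
words agree or are adjacent in every coordinate, they use the copy of `G` at the same positions,
because `G + Ḡ` has no edge between its halves. Then for every `r` the `r`-th letters of the two
words are equal or adjacent both in `G` and in `Ḡ`, so they are equal. Hence these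
`C(2k, k) · n^k` words are distinct and pairwise nonadjacent in `(G + Ḡ)^{2k}`. -/

namespace Paper

def strongProd {V W : Type*} (G : SimpleGraph V) (H : SimpleGraph W) : SimpleGraph (V × W) :=
  SimpleGraph.fromRel (fun x y =>
    (x.1 = y.1 ∨ G.Adj x.1 y.1) ∧ (x.2 = y.2 ∨ H.Adj x.2 y.2))

def strongPow {V : Type*} (G : SimpleGraph V) (k : ℕ) : SimpleGraph (Fin k → V) :=
  SimpleGraph.fromRel (fun x y => ∀ i, x i = y i ∨ G.Adj (x i) (y i))

noncomputable def indepNum {V : Type*} [Fintype V] (G : SimpleGraph V) : ℕ :=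
  sSup {n | ∃ s : Finset V, (∀ a ∈ s, ∀ b ∈ s, a ≠ b → ¬ G.Adj a b) ∧ s.card = n}

noncomputable def shannonCapacity {V : Type*} [Fintype V] (G : SimpleGraph V) : ℝ :=
  ⨆ k : ℕ, (indepNum (strongPow G (k + 1)) : ℝ) ^ ((1 : ℝ) / (k + 1))

noncomputable def lovaszTheta {V : Type*} [Fintype V] (G : SimpleGraph V) : ℝ :=
  sSup {x : ℝ | ∃ B : Matrix V V ℝ, B.PosSemidef ∧ B.trace = 1 ∧
    (∀ i j, G.Adj i j → B i j = 0) ∧ x = ∑ i, ∑ j, B i j}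

noncomputable def fracIndepNum {V : Type*} [Fintype V] (G : SimpleGraph V) : ℝ :=
  sSup {x : ℝ | ∃ f : V → ℝ, (∀ v, 0 ≤ f v) ∧
    (∀ s : Finset V, G.IsClique (s : Set V) → ∑ v ∈ s, f v ≤ 1) ∧ x = ∑ v, f v}

def Universal {V : Type*} [Fintype V] (G : SimpleGraph V) : Prop :=
  ∀ (W : Type) [Fintype W] (H : SimpleGraph W),
    indepNum (strongProd G H) = indepNum G * indepNum H

def sigmaUnion {ι : Type*} {V : ι → Type*} (G : ∀ i, SimpleGraph (V i)) :
    SimpleGraph (Σ i, V i) :=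
  SimpleGraph.fromRel (fun x y =>
    ∃ i, ∃ a b : V i, (G i).Adj a b ∧ x = ⟨i, a⟩ ∧ y = ⟨i, b⟩)

def piStrongProd {ι : Type*} {V : ι → Type*} (G : ∀ i, SimpleGraph (V i)) :
    SimpleGraph (∀ i, V i) :=
  SimpleGraph.fromRel (fun x y => ∀ i, x i = y i ∨ (G i).Adj (x i) (y i))

def tadpole (k l : ℕ) : SimpleGraph (Fin (k + l)) :=
  SimpleGraph.fromRel (fun x y =>
    ((x : ℕ) < k ∧ (y : ℕ) < k ∧ ((x : ℕ) + 1) % k = (y : ℕ)) ∨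
    (k ≤ (x : ℕ) ∧ (y : ℕ) = (x : ℕ) + 1) ∨
    ((x : ℕ) = 0 ∧ (y : ℕ) = k))

open SimpleGraph

theorem indepNum_eq_indepNum {V : Type*} [Fintype V] (G : SimpleGraph V) :
    indepNum G = G.indepNum := by
  simp only [indepNum, SimpleGraph.indepNum, isNIndepSet_iff, isIndepSet_iff]
  rfl

theorem card_le_indepNum_of_map {α W : Type*} [Fintype α] [Fintype W] {H : SimpleGraph W}
    (f : α → W) (hf : ∀ a b, f a = f b ∨ H.Adj (f a) (f b) → a = b) :
    Fintype.card α ≤ indepNum H := by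
  classical
  have hinj : Function.Injective f := fun a b h => hf a b (Or.inl h)
  have hindep : H.IsIndepSet (Finset.univ.image f : Finset W) := by
    simp only [Finset.coe_image, Finset.coe_univ, Set.image_univ]
    rintro _ ⟨a, rfl⟩ _ ⟨b, rfl⟩ hne hadj
    exact hne (congrArg f (hf a b (Or.inr hadj)))
  rw [indepNum_eq_indepNum, ← Finset.card_univ, ← Finset.card_image_of_injective _ hinj]
  exact hindep.card_le_indepNum

theorem eq_or_strongPow_adj_iff {V : Type*} {G : SimpleGraph V} {m : ℕ} {x y : Fin m → V} :
    x = y ∨ (strongPow G m).Adj x y ↔ ∀ i, x i = y i ∨ G.Adj (x i) (y i) := by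
  rw [strongPow, fromRel_adj]
  constructor
  · rintro (rfl | ⟨-, h | h⟩)
    · exact fun i => Or.inl rfl
    · exact h
    · exact fun i => (h i).imp Eq.symm G.adj_symm
  · intro h
    by_cases hxy : x = y
    · exact Or.inl hxy
    · exact Or.inr ⟨hxy, Or.inl h⟩

theorem isLeft_eq_of_eq_or_sum_adj {V W : Type*} {G : SimpleGraph V} {H : SimpleGraph W}
    {x y : V ⊕ W} (h : x = y ∨ (G ⊕g H).Adj x y) : x.isLeft = y.isLeft := by
  rcases h with rfl | h
  · rfl
  · cases x <;> cases y <;> simp_all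

section AlonWord

variable {V : Type*} {k : ℕ}

theorem card_compl_eq_of_card_eq {T : Finset (Fin (2 * k))} (hT : T.card = k) : Tᶜ.card = k := by
  rw [Finset.card_compl, Fintype.card_fin, hT]
  omega

def alonWord (T : {T : Finset (Fin (2 * k)) // T.card = k}) (f : Fin k → V) :
    Fin (2 * k) → V ⊕ V := fun i =>
  if h : i ∈ T.1 then .inl (f ((T.1.orderIsoOfFin T.2).symm ⟨i, h⟩))
  else .inr (f ((T.1ᶜ.orderIsoOfFin (card_compl_eq_of_card_eq T.2)).symm
    ⟨i, Finset.mem_compl.2 h⟩))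

variable (T : {T : Finset (Fin (2 * k)) // T.card = k}) (f : Fin k → V)

theorem isLeft_alonWord (i : Fin (2 * k)) : (alonWord T f i).isLeft = decide (i ∈ T.1) := by
  unfold alonWord
  split_ifs with h <;> simp [h]

theorem alonWord_orderIsoOfFin (r : Fin k) :
    alonWord T f (T.1.orderIsoOfFin T.2 r) = .inl (f r) := by
  rw [alonWord, dif_pos (T.1.orderIsoOfFin T.2 r).2, Subtype.coe_eta, OrderIso.symm_apply_apply]

theorem alonWord_orderIsoOfFin_compl (r : Fin k) :
    alonWord T f (T.1ᶜ.orderIsoOfFin (card_compl_eq_of_card_eq T.2) r) = .inr (f r) := by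
  rw [alonWord, dif_neg (Finset.mem_compl.1 (Subtype.prop _)), Subtype.coe_eta,
    OrderIso.symm_apply_apply]

end AlonWord

theorem eq_and_eq_of_alonWord_eq_or_adj {V : Type*} {k : ℕ} (G : SimpleGraph V)
    {T T' : {T : Finset (Fin (2 * k)) // T.card = k}} {f g : Fin k → V}
    (h : ∀ i, alonWord T f i = alonWord T' g i ∨
      (G ⊕g Gᶜ).Adj (alonWord T f i) (alonWord T' g i)) :
    T = T' ∧ f = g := by
  obtain rfl : T = T' := Subtype.ext <| Finset.ext fun i => by
    simpa [isLeft_alonWord] using isLeft_eq_of_eq_or_sum_adj (h i)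
  refine ⟨rfl, funext fun r => ?_⟩
  have hG := h (T.1.orderIsoOfFin T.2 r)
  have hGc := h (T.1ᶜ.orderIsoOfFin (card_compl_eq_of_card_eq T.2) r)
  simp only [alonWord_orderIsoOfFin, alonWord_orderIsoOfFin_compl, Sum.inl.injEq,
    Sum.inr.injEq, sum_adj_inl, sum_adj_inr] at hG hGc
  by_contra hne
  exact (compl_adj G _ _ |>.1 (hGc.resolve_left hne)).2 (hG.resolve_left hne)

theorem alon_indep_lower_bound {V : Type*} [Fintype V] (G : SimpleGraph V) (k : ℕ) :
    Nat.choose (2 * k) k * Fintype.card V ^ k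
      ≤ indepNum (strongPow (G ⊕g Gᶜ) (2 * k)) := by
  have key := card_le_indepNum_of_map (H := strongPow (G ⊕g Gᶜ) (2 * k))
    (fun p : {T : Finset (Fin (2 * k)) // T.card = k} × (Fin k → V) => alonWord p.1 p.2)
    fun p q h => Prod.ext_iff.2 (eq_and_eq_of_alonWord_eq_or_adj G (eq_or_strongPow_adj_iff.1 h))
  simpa only [Fintype.card_prod, Fintype.card_finset_len, Fintype.card_fin,
    Fintype.card_fun] using key

end Paper
end

section
/- The Kneser graph K(n,r) with n ≥ 2r > 1 is universal if and only if r divides n. -/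
namespace Paper

def kneser (n r : ℕ) : SimpleGraph {s : Finset (Fin n) // s.card = r} :=
  SimpleGraph.fromRel (fun a b => Disjoint (a : Finset (Fin n)) (b : Finset (Fin n)))

section Helpers
set_option linter.unusedSectionVars false
open Finset

variable {V : Type*} [Fintype V] {W : Type*} [Fintype W]
variable {G : SimpleGraph V} {H : SimpleGraph W}

/-- independence predicate matching the one inside `indepNum`. -/
def Indep (G : SimpleGraph V) (s : Finset V) : Prop :=
  ∀ a ∈ s, ∀ b ∈ s, a ≠ b → ¬ G.Adj a b

lemma indepNum_set_nonempty (G : SimpleGraph V) :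
    {n | ∃ s : Finset V, (∀ a ∈ s, ∀ b ∈ s, a ≠ b → ¬ G.Adj a b) ∧ s.card = n}.Nonempty :=
  ⟨0, ∅, by simp, rfl⟩

lemma indepNum_set_bddAbove (G : SimpleGraph V) :
    BddAbove {n | ∃ s : Finset V, (∀ a ∈ s, ∀ b ∈ s, a ≠ b → ¬ G.Adj a b) ∧ s.card = n} := by
  refine ⟨Fintype.card V, ?_⟩
  rintro n ⟨s, -, rfl⟩
  exact s.card_le_univ.trans_eq Finset.card_univ

lemma le_indepNum {s : Finset V} (hs : Indep G s) : s.card ≤ indepNum G :=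
  le_csSup (indepNum_set_bddAbove G) ⟨s, hs, rfl⟩

lemma indepNum_le {m : ℕ} (h : ∀ s : Finset V, Indep G s → s.card ≤ m) : indepNum G ≤ m :=
  csSup_le (indepNum_set_nonempty G) (by rintro n ⟨s, hs, rfl⟩; exact h s hs)

lemma exists_indep_card (G : SimpleGraph V) :
    ∃ s : Finset V, Indep G s ∧ s.card = indepNum G :=
  Nat.sSup_mem (indepNum_set_nonempty G) (indepNum_set_bddAbove G)

lemma strongProd_adj {x y : V × W} :
    (strongProd G H).Adj x y ↔
      x ≠ y ∧ (x.1 = y.1 ∨ G.Adj x.1 y.1) ∧ (x.2 = y.2 ∨ H.Adj x.2 y.2) := by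
  constructor
  · rintro ⟨hne, ⟨h1, h2⟩ | ⟨h1, h2⟩⟩
    · exact ⟨hne, h1, h2⟩
    · exact ⟨hne, h1.imp Eq.symm (fun h => h.symm), h2.imp Eq.symm (fun h => h.symm)⟩
  · rintro ⟨hne, h1, h2⟩
    exact ⟨hne, Or.inl ⟨h1, h2⟩⟩

lemma kneser_adj {n r : ℕ} {a b : {s : Finset (Fin n) // s.card = r}} :
    (kneser n r).Adj a b ↔ a ≠ b ∧ Disjoint (a : Finset (Fin n)) (b : Finset (Fin n)) := by
  constructor
  · rintro ⟨hne, h | h⟩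
    · exact ⟨hne, h⟩
    · exact ⟨hne, h.symm⟩
  · rintro ⟨hne, h⟩
    exact ⟨hne, Or.inl h⟩

end Helpers

section Prod
set_option linter.unusedSectionVars false
open Finset
variable {V : Type*} [Fintype V] {W : Type*} [Fintype W]
variable {G : SimpleGraph V} {H : SimpleGraph W}

lemma indep_product {s : Finset V} {t : Finset W} (hs : Indep G s) (ht : Indep H t) :
    Indep (strongProd G H) (s ×ˢ t) := by
  rintro ⟨a, w⟩ hp ⟨b, w'⟩ hq hne hadj
  rw [strongProd_adj] at hadj
  obtain ⟨-, h1, h2⟩ := hadj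
  rw [Finset.mem_product] at hp hq
  rcases h1 with rfl | h1
  · rcases h2 with rfl | h2
    · exact hne rfl
    · exact ht _ hp.2 _ hq.2 h2.ne h2
  · exact hs _ hp.1 _ hq.1 h1.ne h1

lemma mul_le_indepNum_strongProd (G : SimpleGraph V) (H : SimpleGraph W) :
    indepNum G * indepNum H ≤ indepNum (strongProd G H) := by
  obtain ⟨s, hs, hsc⟩ := exists_indep_card G
  obtain ⟨t, ht, htc⟩ := exists_indep_card H
  have : (s ×ˢ t).card = indepNum G * indepNum H := by
    rw [Finset.card_product, hsc, htc]
  exact this ▸ le_indepNum (indep_product hs ht)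

lemma card_filter_clique_le {S : Finset (V × W)} (hS : Indep (strongProd G H) S)
    {P : V → Prop} [DecidablePred P] (hP : ∀ a b, P a → P b → a = b ∨ G.Adj a b) :
    (S.filter (fun p => P p.1)).card ≤ indepNum H := by
  classical
  set T := S.filter (fun p => P p.1) with hT
  have hTS : ∀ p ∈ T, p ∈ S ∧ P p.1 := by
    intro p hp; rw [hT, Finset.mem_filter] at hp; exact hp
  have hinj : Set.InjOn Prod.snd (T : Set (V × W)) := by
    intro p hp q hq h2
    by_contra hne
    have hp' := hTS p hp; have hq' := hTS q hq
    exact hS p hp'.1 q hq'.1 hne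
      (strongProd_adj.2 ⟨hne, hP _ _ hp'.2 hq'.2, Or.inl h2⟩)
  rw [← Finset.card_image_of_injOn hinj]
  apply le_indepNum
  intro w hw w' hw' hne hadj
  obtain ⟨p, hp, rfl⟩ := Finset.mem_image.1 hw
  obtain ⟨q, hq, rfl⟩ := Finset.mem_image.1 hw'
  have hpq : p ≠ q := fun h => hne (by rw [h])
  exact hS p (hTS p hp).1 q (hTS q hq).1 hpq
    (strongProd_adj.2 ⟨hpq, hP _ _ (hTS p hp).2 (hTS q hq).2, Or.inr hadj⟩)

lemma indepNum_bot_unit : indepNum (⊥ : SimpleGraph Unit) = 1 := by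
  apply le_antisymm
  · exact indepNum_le fun s _ => s.card_le_univ.trans_eq rfl
  · have : Indep (⊥ : SimpleGraph Unit) {()} := by intro a _ b _ _ h; exact h
    simpa using le_indepNum this

lemma indepNum_le_strongProd_unit (G : SimpleGraph V) :
    indepNum G ≤ indepNum (strongProd G (⊥ : SimpleGraph Unit)) := by
  have := mul_le_indepNum_strongProd G (⊥ : SimpleGraph Unit)
  rwa [indepNum_bot_unit, mul_one] at this

end Prod

section Perms
set_option linter.unusedSectionVars false
open Finset

lemma exists_perm_image {α : Type*} [Fintype α] [DecidableEq α] {s t : Finset α}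
    (h : s.card = t.card) : ∃ σ : Equiv.Perm α, s.image σ = t := by
  have e1 : {x // x ∈ s} ≃ {x // x ∈ t} := Fintype.equivOfCardEq (by simp [h])
  have e2 : {x // ¬ x ∈ s} ≃ {x // ¬ x ∈ t} := Fintype.equivOfCardEq (by
    rw [Fintype.card_subtype_compl, Fintype.card_subtype_compl]
    simp [h])
  refine ⟨(Equiv.sumCompl (· ∈ s)).symm.trans ((e1.sumCongr e2).trans
    (Equiv.sumCompl (· ∈ t))), ?_⟩
  have hsub : ∀ x ∈ s, ((Equiv.sumCompl (· ∈ s)).symm.trans ((e1.sumCongr e2).trans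
      (Equiv.sumCompl (· ∈ t)))) x ∈ t := by
    intro x hx
    simp only [Equiv.trans_apply]
    rw [Equiv.sumCompl_symm_apply_of_pos hx]
    simp only [Equiv.sumCongr_apply, Sum.map_inl, Equiv.sumCompl_apply_inl]
    exact (e1 ⟨x, hx⟩).2
  have hcard : t.card ≤ (s.image ((Equiv.sumCompl (· ∈ s)).symm.trans ((e1.sumCongr e2).trans
      (Equiv.sumCompl (· ∈ t))))).card := by
    rw [Finset.card_image_of_injective _ (Equiv.injective _), ← h]
  exact Finset.eq_of_subset_of_card_le
    (fun y hy => by obtain ⟨x, hx, rfl⟩ := Finset.mem_image.1 hy; exact hsub x hx) hcard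

/-- block `i`: the elements of `Fin n` with value in `[i*r, (i+1)*r)`. -/
def blk (n r i : ℕ) : Finset (Fin n) :=
  Finset.univ.filter (fun x : Fin n => i * r ≤ (x : ℕ) ∧ (x : ℕ) < (i + 1) * r)

lemma mem_blk {n r i : ℕ} {x : Fin n} :
    x ∈ blk n r i ↔ i * r ≤ (x : ℕ) ∧ (x : ℕ) < (i + 1) * r := by
  simp [blk]

lemma blk_card {n r i : ℕ} (h : (i + 1) * r ≤ n) : (blk n r i).card = r := by
  rw [← Finset.card_image_of_injective _ Fin.val_injective]
  have : (blk n r i).image Fin.val = Finset.Ico (i * r) ((i + 1) * r) := by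
    ext m
    simp only [Finset.mem_image, Finset.mem_Ico]
    constructor
    · rintro ⟨x, hx, rfl⟩; exact mem_blk.1 hx
    · rintro ⟨h1, h2⟩
      exact ⟨⟨m, lt_of_lt_of_le h2 h⟩, mem_blk.2 ⟨h1, h2⟩, rfl⟩
  rw [this, Nat.card_Ico]
  have : (i + 1) * r = i * r + r := by ring
  omega

lemma blk_disjoint {n r : ℕ} {i j : ℕ} (hij : i ≠ j) :
    Disjoint (blk n r i) (blk n r j) := by
  rw [Finset.disjoint_left]
  intro x hxi hxj
  obtain ⟨h1, h2⟩ := mem_blk.1 hxi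
  obtain ⟨h3, h4⟩ := mem_blk.1 hxj
  rcases Nat.lt_or_ge i j with h | h
  · have := Nat.mul_le_mul_right r (show i + 1 ≤ j from h)
    omega
  · rcases Nat.lt_or_ge j i with h' | h'
    · have := Nat.mul_le_mul_right r (show j + 1 ≤ i from h')
      omega
    · exact hij (le_antisymm h' h)

lemma blk_eq_iff {n r : ℕ} (hr : 0 < r) {i j : ℕ} (hi : (i + 1) * r ≤ n) :
    blk n r i = blk n r j → i = j := by
  intro h
  by_contra hij
  have hne : (blk n r i).Nonempty := by
    rw [← Finset.card_pos, blk_card hi]; exact hr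
  have hd := blk_disjoint (n := n) (r := r) hij
  rw [h] at hd hne
  exact hne.ne_empty (Finset.disjoint_self_iff_empty _ |>.1 hd)

/-- the set of permutations mapping `s` onto `t`. -/
def fib {n : ℕ} (s t : Finset (Fin n)) : Finset (Equiv.Perm (Fin n)) :=
  Finset.univ.filter (fun σ => s.image σ = t)

lemma mem_fib {n : ℕ} {s t : Finset (Fin n)} {σ : Equiv.Perm (Fin n)} :
    σ ∈ fib s t ↔ s.image σ = t := by simp [fib]

lemma fib_card_eq {n : ℕ} {s t u w : Finset (Fin n)} (hsu : u.card = s.card)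
    (htw : t.card = w.card) : (fib s t).card = (fib u w).card := by
  obtain ⟨τ₁, hτ₁⟩ := exists_perm_image hsu
  obtain ⟨τ₂, hτ₂⟩ := exists_perm_image htw
  refine Finset.card_bij' (fun σ _ => τ₁.trans (σ.trans τ₂))
    (fun σ _ => τ₁.symm.trans ((σ.trans τ₂.symm) : Equiv.Perm (Fin n))) ?_ ?_ ?_ ?_
  · intro σ hσ
    rw [mem_fib] at hσ ⊢
    have : u.image (τ₁.trans (σ.trans τ₂)) = ((u.image τ₁).image σ).image τ₂ := by
      rw [Finset.image_image, Finset.image_image]; rfl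
    rw [this, hτ₁, hσ, hτ₂]
  · intro σ hσ
    rw [mem_fib] at hσ ⊢
    have hs' : s.image τ₁.symm = u := by
      rw [← hτ₁, Finset.image_image]
      simp
    have hw' : w.image τ₂.symm = t := by
      rw [← hτ₂, Finset.image_image]
      simp
    have : s.image (τ₁.symm.trans (σ.trans τ₂.symm)) =
        ((s.image τ₁.symm).image σ).image τ₂.symm := by
      rw [Finset.image_image, Finset.image_image]; rfl
    rw [this, hs', hσ, hw']
  · intro σ _; ext x; simp
  · intro σ _; ext x; simp

lemma fib_self_pos {n : ℕ} (s : Finset (Fin n)) : 0 < (fib s s).card := by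
  rw [Finset.card_pos]
  exact ⟨1, mem_fib.2 (by simp)⟩

/-- map a permutation to the image of the base block, as a vertex of the Kneser graph. -/
def permToVtx {n r : ℕ} (b₀ : Finset (Fin n)) (hb₀ : b₀.card = r) (σ : Equiv.Perm (Fin n)) :
    {s : Finset (Fin n) // s.card = r} :=
  ⟨b₀.image σ, by rw [Finset.card_image_of_injective _ (Equiv.injective σ), hb₀]⟩

/-- every permutation maps a fixed `r`-set onto exactly one `r`-set; counting fibers. -/
lemma card_perm_eq {n r : ℕ} (b₀ : Finset (Fin n)) (hb₀ : b₀.card = r) :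
    Fintype.card (Equiv.Perm (Fin n)) = n.choose r * (fib b₀ b₀).card := by
  classical
  rw [← Finset.card_univ,
    Finset.card_eq_sum_card_fiberwise (f := permToVtx b₀ hb₀) (t := Finset.univ)
      (fun x _ => Finset.mem_univ _)]
  have hfib : ∀ v : {s : Finset (Fin n) // s.card = r},
      (Finset.univ.filter (fun σ => permToVtx b₀ hb₀ σ = v)).card = (fib b₀ b₀).card := by
    intro v
    have : Finset.univ.filter (fun σ => permToVtx b₀ hb₀ σ = v) = fib b₀ (↑v) := by
      ext σ
      simp only [Finset.mem_filter, Finset.mem_univ, true_and, mem_fib, Subtype.ext_iff,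
        permToVtx]
    rw [this]
    exact fib_card_eq rfl (v.2.trans hb₀.symm)
  rw [Finset.sum_congr rfl (fun v _ => hfib v), Finset.sum_const, Finset.card_univ,
    Fintype.card_finset_len, Fintype.card_fin, smul_eq_mul]

end Perms

section KeyBound
set_option linter.unusedSectionVars false
open Finset

lemma choose_id {n r k : ℕ} (hn : n = k * r) (hr : 0 < r) (hk : 0 < k) :
    n.choose r = k * (n - 1).choose (r - 1) := by
  have hn1 : 0 < n := hn ▸ Nat.mul_pos hk hr
  have h1 : n - 1 + 1 = n := by omega
  have h2 : r - 1 + 1 = r := by omega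
  have key := Nat.add_one_mul_choose_eq (n - 1) (r - 1)
  rw [h1, h2] at key
  -- key : n * (n-1).choose (r-1) = n.choose r * r
  have hmul : (k * ((n - 1).choose (r - 1))) * r = n.choose r * r := by
    rw [mul_assoc, mul_comm ((n - 1).choose (r - 1)) r, ← mul_assoc, ← hn, key]
  exact (Nat.eq_of_mul_eq_mul_right hr hmul).symm

lemma key_bound {n r k : ℕ} {W : Type*} [Fintype W] (H : SimpleGraph W)
    (hn : n = k * r) (hr : 0 < r) (hk : 0 < k)
    {S : Finset ({s : Finset (Fin n) // s.card = r} × W)}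
    (hS : Indep (strongProd (kneser n r) H) S) :
    S.card ≤ (n - 1).choose (r - 1) * indepNum H := by
  classical
  have hb₀ : (blk n r 0).card = r := blk_card (by
    have := Nat.le_mul_of_pos_left r hk
    omega)
  set b₀ := blk n r 0 with hb₀def
  set M := (fib b₀ b₀).card with hMdef
  have hM : 0 < M := fib_self_pos _
  set A := (n - 1).choose (r - 1) with hAdef
  have hblkcard : ∀ i, i < k → (blk n r i).card = r := by
    intro i hi
    refine blk_card ?_
    have := Nat.mul_le_mul_right r (show i + 1 ≤ k from hi)
    omega
  have hvert : ∀ v : {s : Finset (Fin n) // s.card = r},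
      (Finset.univ.filter
        (fun σ : Equiv.Perm (Fin n) => ∃ i < k, (blk n r i).image σ = ↑v)).card = k * M := by
    intro v
    have heq : Finset.univ.filter
        (fun σ : Equiv.Perm (Fin n) => ∃ i < k, (blk n r i).image σ = ↑v)
        = (Finset.range k).biUnion (fun i => fib (blk n r i) ↑v) := by
      ext σ
      simp [mem_fib, Finset.mem_biUnion, Finset.mem_range]
    rw [heq, Finset.card_biUnion]
    · rw [Finset.sum_congr rfl (fun i hi => fib_card_eq
        ((hb₀.trans (hblkcard i (Finset.mem_range.1 hi)).symm))
        ((v.2.trans hb₀.symm))), Finset.sum_const, Finset.card_range, smul_eq_mul]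
    · intro i hi j hj hij
      rw [Function.onFun, Finset.disjoint_left]
      intro σ hσi hσj
      rw [mem_fib] at hσi hσj
      have : blk n r i = blk n r j := by
        have himg := hσi.trans hσj.symm
        ext x
        constructor
        · intro hx
          by_contra hx'
          have h1 : σ x ∈ (blk n r j).image σ := himg ▸ Finset.mem_image_of_mem _ hx
          obtain ⟨y, hy, hxy⟩ := Finset.mem_image.1 h1
          exact hx' ((σ.injective hxy) ▸ hy)
        · intro hx
          by_contra hx'
          have h1 : σ x ∈ (blk n r i).image σ := himg.symm ▸ Finset.mem_image_of_mem _ hx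
          obtain ⟨y, hy, hxy⟩ := Finset.mem_image.1 h1
          exact hx' ((σ.injective hxy) ▸ hy)
      exact hij (blk_eq_iff hr (by
        have := Nat.mul_le_mul_right r (show i + 1 ≤ k from Finset.mem_range.1 hi)
        omega) this)
  have hdouble : ∑ σ : Equiv.Perm (Fin n),
      (S.filter (fun p => ∃ i < k, (blk n r i).image σ = ↑p.1)).card = S.card * (k * M) := by
    simp_rw [Finset.card_filter]
    rw [Finset.sum_comm]
    rw [Finset.sum_congr rfl (fun p _ => (Finset.card_filter _ _).symm)]
    rw [Finset.sum_congr rfl (fun p _ => hvert p.1), Finset.sum_const, smul_eq_mul]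
  have hper : ∀ σ : Equiv.Perm (Fin n),
      (S.filter (fun p => ∃ i < k, (blk n r i).image σ = ↑p.1)).card ≤ indepNum H := by
    intro σ
    refine card_filter_clique_le (P := fun a => ∃ i < k, (blk n r i).image σ = ↑a) hS ?_
    rintro a b ⟨i, hi, ha⟩ ⟨j, hj, hb⟩
    by_cases hab : a = b
    · exact Or.inl hab
    · refine Or.inr ?_
      rw [kneser_adj]
      refine ⟨hab, ?_⟩
      have hij : i ≠ j := by
        rintro rfl
        exact hab (Subtype.ext (ha.symm.trans hb))
      rw [← ha, ← hb]
      exact (Finset.disjoint_image σ.injective).2 (blk_disjoint hij)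
  have h1 : S.card * (k * M) ≤ Fintype.card (Equiv.Perm (Fin n)) * indepNum H := by
    rw [← hdouble, ← Finset.card_univ, ← smul_eq_mul, ← Finset.sum_const]
    exact Finset.sum_le_sum (fun σ _ => hper σ)
  rw [card_perm_eq b₀ hb₀, choose_id hn hr hk, ← hAdef, ← hMdef] at h1
  have h2 : k * A * M * indepNum H = (k * M) * (A * indepNum H) := by ring
  rw [h2, mul_comm (S.card)] at h1
  exact Nat.le_of_mul_le_mul_left h1 (by positivity)
end KeyBound

section Main
set_option linter.unusedSectionVars false
open Finset

lemma choose_id0 {n r : ℕ} (hn : 0 < n) (hr : 0 < r) :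
    n * (n - 1).choose (r - 1) = n.choose r * r := by
  have h1 : n - 1 + 1 = n := by omega
  have h2 : r - 1 + 1 = r := by omega
  have key := Nat.add_one_mul_choose_eq (n - 1) (r - 1)
  rwa [h1, h2] at key

lemma star_le_indepNum {n r : ℕ} (hr : 0 < r) (hn : 0 < n) :
    (n - 1).choose (r - 1) ≤ indepNum (kneser n r) := by
  classical
  set x0 : Fin n := ⟨0, hn⟩ with hx0
  set s : Finset {t : Finset (Fin n) // t.card = r} :=
    univ.filter (fun v => x0 ∈ (v : Finset (Fin n))) with hs
  have hindep : Indep (kneser n r) s := by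
    intro a ha b hb hne hadj
    rw [kneser_adj] at hadj
    exact (Finset.disjoint_left.1 hadj.2) (mem_filter.1 ha).2 (mem_filter.1 hb).2
  have hcard : s.card = (n - 1).choose (r - 1) := by
    have hbij : s.card = (Finset.powersetCard (r - 1) (univ.erase x0)).card := by
      refine Finset.card_bij (fun (v : {t : Finset (Fin n) // t.card = r}) (_ : v ∈ s) =>
        (v : Finset (Fin n)).erase x0) ?_ ?_ ?_
      · intro v hv
        rw [Finset.mem_powersetCard]
        constructor
        · intro y hy
          rw [Finset.mem_erase] at hy ⊢
          exact ⟨hy.1, mem_univ _⟩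
        · rw [Finset.card_erase_of_mem (mem_filter.1 hv).2, v.2]
      · intro a ha b hb h
        apply Subtype.ext
        rw [← Finset.insert_erase (mem_filter.1 ha).2, ← Finset.insert_erase
          (mem_filter.1 hb).2, h]
      · intro t ht
        rw [Finset.mem_powersetCard] at ht
        have hx0t : x0 ∉ t := fun h => (Finset.mem_erase.1 (ht.1 h)).1 rfl
        refine ⟨⟨insert x0 t, ?_⟩, ?_, ?_⟩
        · rw [Finset.card_insert_of_notMem hx0t, ht.2]; omega
        · rw [hs, mem_filter]; exact ⟨mem_univ _, Finset.mem_insert_self _ _⟩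
        · simp [Finset.erase_insert hx0t]
    rw [hbij, Finset.card_powersetCard, Finset.card_erase_of_mem (mem_univ _),
      Finset.card_univ, Fintype.card_fin]
  exact hcard ▸ le_indepNum hindep

lemma universal_of_dvd {n r : ℕ} (h1 : 1 < 2 * r) (h2 : 2 * r ≤ n) (hd : r ∣ n) :
    Universal (kneser n r) := by
  obtain ⟨k, hk⟩ := hd
  have hr : 0 < r := by omega
  have hk0 : 0 < k := by
    rcases Nat.eq_zero_or_pos k with h | h
    · subst h; omega
    · exact h
  have hn : n = k * r := by rw [hk, mul_comm]
  have hA : indepNum (kneser n r) = (n - 1).choose (r - 1) := by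
    apply le_antisymm
    · have hle : indepNum (strongProd (kneser n r) (⊥ : SimpleGraph Unit)) ≤
          (n - 1).choose (r - 1) * indepNum (⊥ : SimpleGraph Unit) :=
        indepNum_le (fun S hS => key_bound _ hn hr hk0 hS)
      have hh := (indepNum_le_strongProd_unit (kneser n r)).trans hle
      rwa [indepNum_bot_unit, mul_one] at hh
    · exact star_le_indepNum hr (by omega)
  intro W _ H
  apply le_antisymm
  · rw [hA]
    exact indepNum_le (fun S hS => key_bound H hn hr hk0 hS)
  · exact mul_le_indepNum_strongProd _ _

lemma dvd_of_universal {n r : ℕ} (h1 : 1 < 2 * r) (h2 : 2 * r ≤ n)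
    (hu : Universal (kneser n r)) : r ∣ n := by
  classical
  by_contra hnd
  have hr : 0 < r := by omega
  have hn0 : 0 < n := by omega
  set k := n / r with hkdef
  have hk0 : 0 < k := Nat.div_pos (by omega) hr
  have hkr : k * r < n := by
    have hle := Nat.div_mul_le_self n r
    have hne : k * r ≠ n := fun h => hnd ⟨k, by rw [← h, mul_comm]⟩
    rw [hkdef] at hne ⊢
    omega
  -- the complement has independence number exactly k
  have hcompl : indepNum (kneser n r)ᶜ = k := by
    apply le_antisymm
    · apply indepNum_le
      intro s hs
      have hdisj : ∀ a ∈ s, ∀ b ∈ s, a ≠ b →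
          Disjoint ((a : {t : Finset (Fin n) // t.card = r}) : Finset (Fin n)) ↑b := by
        intro a ha b hb hne
        have hnadj := hs a ha b hb hne
        rw [SimpleGraph.compl_adj] at hnadj
        push_neg at hnadj
        exact (kneser_adj.1 (hnadj hne)).2
      have hcard : (s.biUnion (fun v => (v : Finset (Fin n)))).card = s.card * r := by
        rw [Finset.card_biUnion hdisj, Finset.sum_congr rfl (fun v _ => v.2),
          Finset.sum_const, smul_eq_mul]
      have hle : s.card * r ≤ n := by
        rw [← hcard]
        exact (Finset.card_le_univ _).trans_eq (by simp)
      exact (Nat.le_div_iff_mul_le hr).2 hle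
    · have hblk : ∀ i : Fin k, ((i : ℕ) + 1) * r ≤ n :=
        fun i => (Nat.mul_le_mul_right r i.2).trans hkr.le
      set f : Fin k → {t : Finset (Fin n) // t.card = r} :=
        fun i => ⟨blk n r i, blk_card (hblk i)⟩ with hf
      have hinj : Function.Injective f := by
        intro i j hij
        have : blk n r (i : ℕ) = blk n r (j : ℕ) := congrArg Subtype.val hij
        exact Fin.ext (blk_eq_iff hr (hblk i) this)
      have hindep : Indep (kneser n r)ᶜ (univ.image f) := by
        intro a ha b hb hne hadj
        obtain ⟨i, -, rfl⟩ := mem_image.1 ha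
        obtain ⟨j, -, rfl⟩ := mem_image.1 hb
        have hij : i ≠ j := fun h => hne (by rw [h])
        rw [SimpleGraph.compl_adj] at hadj
        exact hadj.2 (kneser_adj.2 ⟨hne, blk_disjoint (fun h => hij (Fin.ext h))⟩)
      have := le_indepNum hindep
      rwa [Finset.card_image_of_injective _ hinj, Finset.card_univ, Fintype.card_fin] at this
  -- Erdős–Ko–Rado
  have hekr : indepNum (kneser n r) ≤ (n - 1).choose (r - 1) := by
    apply indepNum_le
    intro S hS
    rw [← Finset.card_image_of_injective S Subtype.val_injective]
    apply Finset.erdos_ko_rado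
    · intro a ha b hb
      rw [Finset.mem_coe, Finset.mem_image] at ha hb
      obtain ⟨va, hva, rfl⟩ := ha
      obtain ⟨vb, hvb, rfl⟩ := hb
      by_cases hvab : va = vb
      · subst hvab
        intro hdisj
        have hemp : (va : Finset (Fin n)) = ∅ := Finset.disjoint_self_iff_empty _ |>.1 hdisj
        have hcard := va.2
        rw [hemp, Finset.card_empty] at hcard
        omega
      · intro hdisj
        exact hS va hva vb hvb hvab (kneser_adj.2 ⟨hvab, hdisj⟩)
    · intro a ha
      rw [Finset.mem_coe, Finset.mem_image] at ha
      obtain ⟨va, -, rfl⟩ := ha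
      exact va.2
    · exact (Nat.le_div_iff_mul_le two_pos).2 (by omega)
  -- the diagonal is independent in G ⊠ Gᶜ
  have hdiag : n.choose r ≤ indepNum (strongProd (kneser n r) (kneser n r)ᶜ) := by
    have hind : Indep (strongProd (kneser n r) (kneser n r)ᶜ)
        (univ.image (fun v : {t : Finset (Fin n) // t.card = r} => (v, v))) := by
      rintro p hp q hq hne hadj
      obtain ⟨a, -, rfl⟩ := mem_image.1 hp
      obtain ⟨b, -, rfl⟩ := mem_image.1 hq
      rw [strongProd_adj] at hadj
      obtain ⟨-, hA1, hA2⟩ := hadj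
      have hab : a ≠ b := fun h => hne (by rw [h])
      rcases hA1 with h | h
      · exact hab h
      · rcases hA2 with h' | h'
        · exact hab h'
        · exact ((SimpleGraph.compl_adj _ _ _).1 h').2 h
    have hc := le_indepNum hind
    rwa [Finset.card_image_of_injective _ (fun a b h => (Prod.ext_iff.1 h).1),
      Finset.card_univ, Fintype.card_finset_len, Fintype.card_fin] at hc
  have hu' := hu _ (kneser n r)ᶜ
  rw [hu', hcompl] at hdiag
  have hAk : indepNum (kneser n r) * k ≤ (n - 1).choose (r - 1) * k :=
    Nat.mul_le_mul_right _ hekr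
  have hpos : 0 < (n - 1).choose (r - 1) := Nat.choose_pos (by omega)
  have hkey : ((n - 1).choose (r - 1) * k) * r < n.choose r * r := by
    calc ((n - 1).choose (r - 1) * k) * r = (n - 1).choose (r - 1) * (k * r) := by ring
      _ < (n - 1).choose (r - 1) * n := by exact mul_lt_mul_of_pos_left hkr hpos
      _ = n * (n - 1).choose (r - 1) := mul_comm _ _
      _ = n.choose r * r := choose_id0 hn0 hr
  have hlt : (n - 1).choose (r - 1) * k < n.choose r := by
    rw [mul_comm ((n - 1).choose (r - 1) * k) r, mul_comm (n.choose r) r] at hkey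
    exact Nat.lt_of_mul_lt_mul_left hkey
  omega

end Main


theorem kneser_universal_iff (n r : ℕ) (h1 : 1 < 2 * r) (h2 : 2 * r ≤ n) :
    Universal (kneser n r) ↔ r ∣ n :=
  ⟨dvd_of_universal h1 h2, universal_of_dvd h1 h2⟩

end Paper
end
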